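/- arXiv:0810.0702 — 2 statements merged into one kernel-verified Lean document; each statement's English description precedes it below -/
import Mathlib

section
/- Let g ≥ 1 and d ≥ 2 be integers and set δ := (d−1)(d−2)/2 − g (an integer). If the Brill–Noether number ρ(g,2,d) := g − 3(g−d+2) is nonnegative and 3d + g − 1 ≥ 2δ, then d ≤ 9 and g ≤ 10. -/
/-!
Writing `δ` out, `3d + g - 1 ≥ 2δ` reads `d² - 6d + 3 ≤ 3g`, while `ρ(g,2,d) ≥ 0` reads
`2g ≤ 3d - 6`. Eliminating `g` leaves `2d² - 21d + 24 ≤ 0`, whose larger root lies just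
above `9`; hence `d ≤ 9` and then `2g ≤ 21`.
-/

theorem Int.two_mul_sub_one_mul_sub_two_ediv_two (d : ℤ) :
    2 * ((d - 1) * (d - 2) / 2) = (d - 1) * (d - 2) :=
  Int.two_mul_ediv_two_of_even <| by
    simpa only [sub_sub, one_add_one_eq_two] using Int.even_mul_pred_self (d - 1)

theorem degree_le_nine_of_genus_bounds {g d : ℤ} (hρ : 2 * g ≤ 3 * d - 6)
    (hnodes : (d - 1) * (d - 2) ≤ 3 * d + 3 * g - 1) : d ≤ 9 := by
  nlinarith

theorem severi_numerics_general (g d δ : ℤ)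
    (hδ : δ = (d - 1) * (d - 2) / 2 - g)
    (hρ : 0 ≤ g - 3 * (g - d + 2))
    (hineq : 3 * d + g - 1 ≥ 2 * δ) :
    d ≤ 9 ∧ g ≤ 10 := by
  have hρ' : 2 * g ≤ 3 * d - 6 := by linarith
  have hnodes : (d - 1) * (d - 2) ≤ 3 * d + 3 * g - 1 := by
    have := Int.two_mul_sub_one_mul_sub_two_ediv_two d
    rw [hδ] at hineq
    linarith
  have hdeg : d ≤ 9 := degree_le_nine_of_genus_bounds hρ' hnodes
  exact ⟨hdeg, by omega⟩

/-- Numerical core of Severi's unirationality argument: if `g ≥ 1`, `d ≥ 2`,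
`δ = (d-1)(d-2)/2 - g`, the Brill–Noether number `ρ(g,2,d) = g - 3(g-d+2)` is
nonnegative and `3d + g - 1 ≥ 2δ`, then `d ≤ 9` and `g ≤ 10`. -/
theorem severi_numerics (g d δ : ℤ) (hg : 1 ≤ g) (hd : 2 ≤ d)
    (hδ : δ = (d - 1) * (d - 2) / 2 - g)
    (hρ : 0 ≤ g - 3 * (g - d + 2))
    (hineq : 3 * d + g - 1 ≥ 2 * δ) :
    d ≤ 9 ∧ g ≤ 10 :=
  severi_numerics_general g d δ hδ hρ hineq
end

section
/- For every integer i ≥ 0, the following binomial identity holds: ∑_{l=0}^{i} (−1)^l · C(2i+3, i−l) · C(2i+4+l, 2i+3) + ∑_{l=0}^{i−1} (−1)^l · C(2i+4+l, l+2) · C(2i+2, i−l−1) = 4(2i+1) · C(2i, i), where C(n,k) denotes the binomial coefficient (so for i = 0 the second sum is empty). -/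
/-!
Since `(-1)^l C(n+l, l) = C(-(n+1), l)`, the Chu–Vandermonde identity in the binomial ring `ℤ`
gives `∑_{l ≤ m} (-1)^l C(n+l, l) C(n, m-l) = C(-1, m) = (-1)^m`, the coefficient identity
behind `(1+x)^{-n-1} (1+x)^n = (1+x)^{-1}`. The two sums of the theorem are this convolution for
`n = 2i+3` and `n = 2i+2`, `m = i+1`, with its first one resp. two terms removed. The signs
`(-1)^i` and `(-1)^(i+1)` cancel, and by Pascal's rule what is left is `(2i+4) C(2i+2, i)`,
which is `4(2i+1) C(2i, i)` by two applications of `(n+1) C(n, k) = C(n+1, k+1) (k+1)`.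
-/

open Finset

theorem Ring.choose_neg_natCast_add_one {R : Type*} [CommRing R] [BinomialRing R] (n l : ℕ) :
    Ring.choose (-(n + 1 : R)) l = (-1) ^ l * (n + l).choose l := by
  rw [Ring.choose_neg, Units.smul_def, Int.coe_negOnePow_natCast,
    show (n + 1 : R) + l - 1 = ((n + l : ℕ) : R) by push_cast; ring, Ring.choose_natCast,
    zsmul_eq_mul]
  push_cast; rfl

theorem Ring.choose_neg_one {R : Type*} [CommRing R] [BinomialRing R] (m : ℕ) :
    Ring.choose (-1 : R) m = (-1) ^ m := by
  simpa using Ring.choose_neg_natCast_add_one (R := R) 0 m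

theorem sum_range_neg_one_pow_mul_add_choose_mul_choose (n m : ℕ) :
    ∑ l ∈ range (m + 1), (-1 : ℤ) ^ l * (n + l).choose l * n.choose (m - l) = (-1) ^ m := by
  have vandermonde := Ring.add_choose_eq (r := -(n + 1 : ℤ)) (s := n) m (Commute.all _ _)
  rw [show -(n + 1 : ℤ) + n = -1 by ring, Ring.choose_neg_one,
    Nat.sum_antidiagonal_eq_sum_range_succ
      (fun a b => Ring.choose (-(n + 1 : ℤ)) a * Ring.choose (n : ℤ) b)] at vandermonde
  simp only [Ring.choose_neg_natCast_add_one, Ring.choose_natCast] at vandermonde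
  exact vandermonde.symm

theorem sum_range_neg_one_pow_mul_choose_mul_add_succ_choose (n m : ℕ) :
    ∑ l ∈ range (m + 1), (-1 : ℤ) ^ l * n.choose (m - l) * (n + 1 + l).choose n =
      n.choose (m + 1) + (-1) ^ m := by
  have convolution := sum_range_neg_one_pow_mul_add_choose_mul_choose n (m + 1)
  have shifted_term (l : ℕ) : (-1 : ℤ) ^ (l + 1) * (n + (l + 1)).choose (l + 1) *
      n.choose (m + 1 - (l + 1)) = -((-1) ^ l * n.choose (m - l) * (n + 1 + l).choose n) := by
    rw [show n + (l + 1) = n + 1 + l by ring, ← Nat.choose_symm_of_eq_add (by ring),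
      Nat.add_sub_add_right, pow_succ]
    ring
  rw [sum_range_succ'] at convolution
  simp only [shifted_term, sum_neg_distrib, pow_zero, add_zero,
    Nat.choose_zero_right, Nat.sub_zero] at convolution
  rw [pow_succ] at convolution
  push_cast at convolution
  linarith

theorem sum_range_neg_one_pow_mul_add_two_choose_mul_choose (n m : ℕ) :
    ∑ l ∈ range m, (-1 : ℤ) ^ l * (n + 2 + l).choose (l + 2) * n.choose (m - l - 1) =
      (-1) ^ (m + 1) - n.choose (m + 1) + (n + 1) * n.choose m := by
  have convolution := sum_range_neg_one_pow_mul_add_choose_mul_choose n (m + 1)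
  have shifted_term (l : ℕ) : (-1 : ℤ) ^ (l + 1 + 1) * (n + (l + 1 + 1)).choose (l + 1 + 1) *
      n.choose (m + 1 - (l + 1 + 1)) =
        (-1) ^ l * (n + 2 + l).choose (l + 2) * n.choose (m - l - 1) := by
    rw [show n + (l + 1 + 1) = n + 2 + l by ring, Nat.add_sub_add_right, Nat.sub_sub,
      pow_succ, pow_succ]
    ring
  rw [sum_range_succ', sum_range_succ'] at convolution
  simp only [shifted_term, pow_zero, pow_one, add_zero, zero_add,
    Nat.choose_zero_right, Nat.choose_one_right, Nat.sub_zero, Nat.add_sub_cancel] at convolution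
  push_cast at convolution
  linarith

theorem two_mul_add_four_mul_choose (i : ℕ) :
    (2 * i + 4) * (2 * i + 2).choose i = 4 * (2 * i + 1) * (2 * i).choose i := by
  calc (2 * i + 4) * (2 * i + 2).choose i = 2 * ((2 * i + 2).choose (i + 2) * (i + 2)) := by
        rw [← Nat.choose_symm_of_eq_add (show 2 * i + 2 = i + (i + 2) by ring)]; ring
    _ = 2 * ((2 * i + 1 + 1) * (2 * i + 1).choose (i + 1)) := by
        rw [Nat.add_one_mul_choose_eq]
    _ = 4 * ((2 * i + 1).choose (i + 1) * (i + 1)) := by ring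
    _ = 4 * (2 * i + 1) * (2 * i).choose i := by rw [← Nat.add_one_mul_choose_eq]; ring

/-- The binomial identity computing `c₁(H_{i,2}) = 4(2i+1)·C(2i,i)·c₁(H_{0,1})`
in the proof of the class of the virtual Koszul divisor on `M̄_{2i+3}`. -/
theorem koszul_hodge_class_identity (i : ℕ) :
    (∑ l ∈ Finset.range (i + 1),
        (-1 : ℤ) ^ l * (Nat.choose (2 * i + 3) (i - l)) *
          (Nat.choose (2 * i + 4 + l) (2 * i + 3))) +
      (∑ l ∈ Finset.range i,
        (-1 : ℤ) ^ l * (Nat.choose (2 * i + 4 + l) (l + 2)) *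
          (Nat.choose (2 * i + 2) (i - l - 1))) =
    4 * (2 * i + 1) * (Nat.choose (2 * i) i) := by
  have pascal : (2 * i + 3).choose (i + 1) = (2 * i + 2).choose i + (2 * i + 2).choose (i + 1) :=
    Nat.choose_succ_succ' _ _
  have central :
      ((2 * i + 4) * (2 * i + 2).choose i : ℤ) = 4 * (2 * i + 1) * (2 * i).choose i := by
    exact_mod_cast two_mul_add_four_mul_choose i
  rw [sum_range_neg_one_pow_mul_choose_mul_add_succ_choose (2 * i + 3) i,
    sum_range_neg_one_pow_mul_add_two_choose_mul_choose (2 * i + 2) i, pascal, pow_succ]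
  push_cast
  linear_combination central
end
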